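/- arXiv:1305.3163 — 2 statements merged into one kernel-verified Lean document; each statement's English description precedes it below -/
import Mathlib

section
/- Soundness of the abstract stack live-address computation: for every continuation store Ξ, frame list κ, abstract continuation κ̂, and address set L, if κ ∈ unroll(Ξ,κ̂) then KLL*(κ,L) ∈ K̂LL(Ξ,κ̂,L) (i.e. the concrete live-address set is among the terminal results of the abstract rewrite system started at KLL*(Ξ,κ̂,L)). -/
abbrev Var := ℕ
abbrev Addr := ℕ

/-- Expressions of the untyped call-by-value λ-calculus. -/
inductive Expr : Type
  | var : Var → Expr
  | app : Expr → Expr → Expr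
  | lam : Var → Expr → Expr

/-- Environments: finite maps from variables to addresses. -/
abbrev Env := Var → Option Addr

/-- Values are closures (λx.e, ρ). -/
structure Value : Type where
  param : Var
  body : Expr
  env : Env

def Value.toExpr (v : Value) : Expr := .lam v.param v.body

/-- Frames φ ::= appL(e,ρ) | appR(v). -/
inductive Frame : Type
  | appL : Expr → Env → Frame
  | appR : Value → Frame

/-- Free variables of an expression. -/
def fv : Expr → Set Var
  | .var x => {x}
  | .app e₀ e₁ => fv e₀ ∪ fv e₁
  | .lam x e => fv e \ {x}

/-- T(e,ρ) = { ρ(x) : x ∈ fv(e) }. -/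
def touchE (e : Expr) (ρ : Env) : Set Addr := {a | ∃ x ∈ fv e, ρ x = some a}

/-- Addresses touched by a frame. -/
def touchF : Frame → Set Addr
  | .appL e ρ => touchE e ρ
  | .appR v => touchE v.toExpr v.env

/-- Abstract continuations kh ::= ε | φ·τ, over an arbitrary type of contexts. -/
inductive AKont (Ctx : Type) : Type
  | eps : AKont Ctx
  | cons : Frame → Ctx → AKont Ctx

/-- Unrolling of abstract continuations into frame lists. -/
inductive Unroll {Ctx : Type} (Ξ : Ctx → Set (AKont Ctx)) :
    AKont Ctx → List Frame → Prop
  | eps : Unroll Ξ .eps []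
  | cons {φ τ kh κ} : kh ∈ Ξ τ → Unroll Ξ kh κ → Unroll Ξ (.cons φ τ) (φ :: κ)

/-- Concrete live-address computation KLL* on frame lists. -/
def kll : List Frame → Set Addr → Set Addr
  | [], L => L
  | φ :: κ, L => kll κ (L ∪ touchF φ)

/-- Terms of the abstract rewrite system: running terms KLL*(Ξ,kh,L) and
    finished address sets. -/
inductive KTerm (Ctx : Type) : Type
  | run : AKont Ctx → Set Addr → KTerm Ctx
  | done : Set Addr → KTerm Ctx

/-- The abstract rewrite relation on KLL* terms. -/
inductive KStepR {Ctx : Type} (Ξ : Ctx → Set (AKont Ctx)) :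
    KTerm Ctx → KTerm Ctx → Prop
  | eps {L} : KStepR Ξ (.run .eps L) (.done L)
  | cons {φ τ kh L} : kh ∈ Ξ τ →
      KStepR Ξ (.run (.cons φ τ) L) (.run kh (L ∪ touchF φ))

/-- K̂LL(Ξ,kh,L): terminal results of the abstract rewrite system started
    at KLL*(Ξ,kh,L). -/
def KhatLL {Ctx : Type} (Ξ : Ctx → Set (AKont Ctx)) (kh : AKont Ctx)
    (L : Set Addr) : Set (Set Addr) :=
  {L' | Relation.ReflTransGen (KStepR Ξ) (.run kh L) (.done L')}

/-- Soundness of the abstract stack live-address computation. -/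
theorem khatll_sound {Ctx : Type} (Ξ : Ctx → Set (AKont Ctx))
    (κ : List Frame) (kh : AKont Ctx) (L : Set Addr)
    (h : Unroll Ξ kh κ) :
    kll κ L ∈ KhatLL Ξ kh L := by
  induction h generalizing L with
  | eps => exact Relation.ReflTransGen.single KStepR.eps
  | cons hmem _ ih =>
      exact Relation.ReflTransGen.head (KStepR.cons hmem) (ih _)
end

section
/- Completeness of the abstract stack live-address computation: for every continuation store Ξ, abstract continuation κ̂, and address set L, if L′ ∈ K̂LL(Ξ,κ̂,L) (a terminal result of the abstract rewrite system started at KLL*(Ξ,κ̂,L)), then there exists a frame list κ ∈ unroll(Ξ,κ̂) such that L′ = KLL*(κ,L). -/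
lemma done_irred {Ctx : Type} (Ξ : Ctx → Set (AKont Ctx)) {L L' : Set Addr}
    (h : Relation.ReflTransGen (KStepR Ξ) (.done L) (.done L')) : L = L' := by
  cases h.cases_head with
  | inl h => exact (KTerm.done.injEq _ _).mp h
  | inr h => obtain ⟨c, hstep, _⟩ := h; cases hstep

lemma khatll_aux {Ctx : Type} (Ξ : Ctx → Set (AKont Ctx)) {t : KTerm Ctx}
    {L' : Set Addr} (h : Relation.ReflTransGen (KStepR Ξ) t (.done L')) :
    ∀ kh L, t = .run kh L → ∃ κ : List Frame, Unroll Ξ kh κ ∧ L' = kll κ L := by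
  induction h using Relation.ReflTransGen.head_induction_on with
  | refl => intro kh L he; cases he
  | head hstep _ ih =>
    intro kh L he
    subst he
    cases hstep with
    | eps =>
      rename_i hrest
      exact ⟨[], Unroll.eps, (done_irred Ξ hrest).symm⟩
    | cons hmem =>
      rename_i φ τ kh' _
      obtain ⟨κ, hu, hL⟩ := ih kh' _ rfl
      exact ⟨φ :: κ, Unroll.cons hmem hu, hL⟩

/-- Completeness of the abstract stack live-address computation. -/
theorem khatll_complete {Ctx : Type} (Ξ : Ctx → Set (AKont Ctx))
    (kh : AKont Ctx) (L : Set Addr) (L' : Set Addr)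
    (h : L' ∈ KhatLL Ξ kh L) :
    ∃ κ : List Frame, Unroll Ξ kh κ ∧ L' = kll κ L := by
  exact khatll_aux Ξ h kh L rfl
end
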